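/- Comparison principle for monotone constant-preserving schemes: suppose an operator S(Δ,t,x,p,v), nonincreasing in v and translation-invariant (S(Δ,t,x,p+c,v+c) = S(Δ,t,x,p,v)), satisfies S(Δ,t,x,u(t,x),u(t+Δ,·)) ≤ h₁(t,x) and S(Δ,t,x,v(t,x),v(t+Δ,·)) ≥ h₂(t,x) on [0,T−Δ]×ℝ^n for bounded continuous u, v, where S(Δ,t,x,p,w) = (p − 𝐒_t(Δ)w(x))/Δ for a monotone, constant-preserving operator 𝐒_t(Δ). Then u − v ≤ sup over (T−Δ,T]×ℝ^n of (u−v)⁺ + (T−t) sup (h₁−h₂)⁺ on [0,T]×ℝ^n. -/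
import Mathlib


/-- Comparison principle for monotone, constant-preserving approximation schemes
`S(Δ,t,x,p,w) = (p - 𝐒_t(Δ)w(x))/Δ`: if `u` is an approximate subsolution and `v` an
approximate supersolution with right-hand sides `h₁, h₂`, then
`u - v ≤ sup_{(T-Δ,T]×ℝⁿ}(u-v)⁺ + (T-t) sup (h₁-h₂)⁺` on `[0,T]×ℝⁿ`. -/
theorem stmt12 {n : ℕ} (T Δ : ℝ) (hΔ : 0 < Δ) (hΔT : Δ ≤ T)
    (Sop : ℝ → (EuclideanSpace ℝ (Fin n) → ℝ) → EuclideanSpace ℝ (Fin n) → ℝ)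
    (hmono : ∀ (t : ℝ) (φ ψ : EuclideanSpace ℝ (Fin n) → ℝ),
      (∀ x, ψ x ≤ φ x) → ∀ x, Sop t ψ x ≤ Sop t φ x)
    (hconst : ∀ (t : ℝ) (φ : EuclideanSpace ℝ (Fin n) → ℝ) (c : ℝ) (x),
      Sop t (fun z => φ z + c) x = Sop t φ x + c)
    (u v : ℝ → EuclideanSpace ℝ (Fin n) → ℝ)
    (hub : ∃ C : ℝ, ∀ t x, |u t x| ≤ C) (hvb : ∃ C : ℝ, ∀ t x, |v t x| ≤ C)
    (h₁ h₂ : ℝ → EuclideanSpace ℝ (Fin n) → ℝ)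
    (hh₁b : ∃ C : ℝ, ∀ t x, |h₁ t x| ≤ C) (hh₂b : ∃ C : ℝ, ∀ t x, |h₂ t x| ≤ C)
    (hsub : ∀ t ∈ Set.Icc (0:ℝ) (T - Δ), ∀ x,
      (u t x - Sop t (u (t + Δ)) x) / Δ ≤ h₁ t x)
    (hsup : ∀ t ∈ Set.Icc (0:ℝ) (T - Δ), ∀ x,
      h₂ t x ≤ (v t x - Sop t (v (t + Δ)) x) / Δ) :
    ∀ t ∈ Set.Icc (0:ℝ) T, ∀ x, u t x - v t x ≤
      sSup ((fun p : ℝ × EuclideanSpace ℝ (Fin n) => max (u p.1 p.2 - v p.1 p.2) 0) ''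
        (Set.Ioc (T - Δ) T ×ˢ (Set.univ : Set (EuclideanSpace ℝ (Fin n))))) +
      (T - t) *
      sSup ((fun p : ℝ × EuclideanSpace ℝ (Fin n) => max (h₁ p.1 p.2 - h₂ p.1 p.2) 0) ''
        (Set.Icc (0:ℝ) (T - Δ) ×ˢ (Set.univ : Set (EuclideanSpace ℝ (Fin n))))) := by
  obtain ⟨Cu, hCu⟩ := hub
  obtain ⟨Cv, hCv⟩ := hvb
  obtain ⟨C1, hC1⟩ := hh₁b
  obtain ⟨C2, hC2⟩ := hh₂b
  set M := sSup ((fun p : ℝ × EuclideanSpace ℝ (Fin n) => max (u p.1 p.2 - v p.1 p.2) 0) ''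
      (Set.Ioc (T - Δ) T ×ˢ (Set.univ : Set (EuclideanSpace ℝ (Fin n))))) with hMdef
  set K := sSup ((fun p : ℝ × EuclideanSpace ℝ (Fin n) => max (h₁ p.1 p.2 - h₂ p.1 p.2) 0) ''
      (Set.Icc (0:ℝ) (T - Δ) ×ˢ (Set.univ : Set (EuclideanSpace ℝ (Fin n))))) with hKdef
  have hCu0 : 0 ≤ Cu := le_trans (abs_nonneg _) (hCu 0 0)
  have hCv0 : 0 ≤ Cv := le_trans (abs_nonneg _) (hCv 0 0)
  have hC10 : 0 ≤ C1 := le_trans (abs_nonneg _) (hC1 0 0)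
  have hC20 : 0 ≤ C2 := le_trans (abs_nonneg _) (hC2 0 0)
  have bddM : BddAbove ((fun p : ℝ × EuclideanSpace ℝ (Fin n) => max (u p.1 p.2 - v p.1 p.2) 0) ''
      (Set.Ioc (T - Δ) T ×ˢ (Set.univ : Set (EuclideanSpace ℝ (Fin n))))) := by
    refine ⟨Cu + Cv, ?_⟩
    rintro y ⟨p, -, rfl⟩
    have h1 := abs_le.mp (hCu p.1 p.2)
    have h2 := abs_le.mp (hCv p.1 p.2)
    exact max_le (by linarith [h1.2, h2.1]) (by linarith)
  have bddK : BddAbove ((fun p : ℝ × EuclideanSpace ℝ (Fin n) => max (h₁ p.1 p.2 - h₂ p.1 p.2) 0) ''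
      (Set.Icc (0:ℝ) (T - Δ) ×ˢ (Set.univ : Set (EuclideanSpace ℝ (Fin n))))) := by
    refine ⟨C1 + C2, ?_⟩
    rintro y ⟨p, -, rfl⟩
    have h1 := abs_le.mp (hC1 p.1 p.2)
    have h2 := abs_le.mp (hC2 p.1 p.2)
    exact max_le (by linarith [h1.2, h2.1]) (by linarith)
  have hK0 : 0 ≤ K := by
    have hmem : max (h₁ 0 0 - h₂ 0 0) 0 ∈
        ((fun p : ℝ × EuclideanSpace ℝ (Fin n) => max (h₁ p.1 p.2 - h₂ p.1 p.2) 0) ''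
        (Set.Icc (0:ℝ) (T - Δ) ×ˢ (Set.univ : Set (EuclideanSpace ℝ (Fin n))))) :=
      ⟨(0, 0), ⟨⟨le_refl _, show (0:ℝ) ≤ T - Δ by linarith⟩, Set.mem_univ _⟩, rfl⟩
    exact le_trans (le_max_right _ _) (le_csSup bddK hmem)
  -- bound on the final layer
  have hfin : ∀ s ∈ Set.Ioc (T - Δ) T, ∀ y, u s y - v s y ≤ M := by
    intro s hs y
    have hmem : max (u s y - v s y) 0 ∈
        ((fun p : ℝ × EuclideanSpace ℝ (Fin n) => max (u p.1 p.2 - v p.1 p.2) 0) ''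
        (Set.Ioc (T - Δ) T ×ˢ (Set.univ : Set (EuclideanSpace ℝ (Fin n))))) :=
      ⟨(s, y), ⟨hs, Set.mem_univ _⟩, rfl⟩
    exact le_trans (le_max_left _ _) (le_csSup bddM hmem)
  have hKbd : ∀ s ∈ Set.Icc (0:ℝ) (T - Δ), ∀ y, h₁ s y - h₂ s y ≤ K := by
    intro s hs y
    have hmem : max (h₁ s y - h₂ s y) 0 ∈
        ((fun p : ℝ × EuclideanSpace ℝ (Fin n) => max (h₁ p.1 p.2 - h₂ p.1 p.2) 0) ''
        (Set.Icc (0:ℝ) (T - Δ) ×ˢ (Set.univ : Set (EuclideanSpace ℝ (Fin n))))) :=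
      ⟨(s, y), ⟨hs, Set.mem_univ _⟩, rfl⟩
    exact le_trans (le_max_left _ _) (le_csSup bddK hmem)
  have key : ∀ k : ℕ, ∀ s ∈ Set.Icc (0:ℝ) T, T - s < (k + 1) * Δ →
      ∀ y, u s y - v s y ≤ M + (T - s) * K := by
    intro k
    induction k with
    | zero =>
      intro s hs hlt y
      have hsΔ : T - Δ < s := by push_cast at hlt; linarith
      have h1 : u s y - v s y ≤ M := hfin s ⟨hsΔ, hs.2⟩ y
      have h2 : 0 ≤ (T - s) * K := mul_nonneg (by linarith [hs.2]) hK0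
      linarith
    | succ k ih =>
      intro s hs hlt y
      by_cases hcase : T - Δ < s
      · have h1 : u s y - v s y ≤ M := hfin s ⟨hcase, hs.2⟩ y
        have h2 : 0 ≤ (T - s) * K := mul_nonneg (by linarith [hs.2]) hK0
        linarith
      · push_neg at hcase
        have hsIcc : s ∈ Set.Icc (0:ℝ) (T - Δ) := ⟨hs.1, hcase⟩
        have hsΔT : s + Δ ∈ Set.Icc (0:ℝ) T := ⟨by linarith [hs.1], by linarith⟩
        have hlt' : T - (s + Δ) < (k + 1) * Δ := by push_cast at hlt ⊢; linarith
        have hIH := ih (s + Δ) hsΔT hlt'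
        set c : ℝ := M + (T - (s + Δ)) * K with hc
        have hle : ∀ z, u (s + Δ) z ≤ (fun z => v (s + Δ) z + c) z := fun z => by
          have := hIH z; simpa using by linarith
        have hS : Sop s (u (s + Δ)) y ≤ Sop s (v (s + Δ)) y + c := by
          have := hmono s (fun z => v (s + Δ) z + c) (u (s + Δ)) hle y
          rwa [hconst s (v (s + Δ)) c y] at this
        have hu : u s y ≤ Sop s (u (s + Δ)) y + Δ * h₁ s y := by
          have := hsub s hsIcc y
          rw [div_le_iff₀ hΔ] at this
          linarith
        have hv : Sop s (v (s + Δ)) y + Δ * h₂ s y ≤ v s y := by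
          have := hsup s hsIcc y
          rw [le_div_iff₀ hΔ] at this
          linarith
        have hKh : h₁ s y - h₂ s y ≤ K := hKbd s hsIcc y
        have : u s y - v s y ≤ c + Δ * K := by nlinarith
        have hceq : c + Δ * K = M + (T - s) * K := by rw [hc]; ring
        linarith [hceq ▸ this]
  intro t ht x
  obtain ⟨k, hk⟩ := exists_nat_gt ((T - t) / Δ)
  have hlt : T - t < (k + 1) * Δ := by
    rw [div_lt_iff₀ hΔ] at hk
    nlinarith [hΔ.le]
  exact key k t ht hlt x
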